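/- arXiv:2508.14868 — 3 statements merged into one kernel-verified Lean document; each statement's English description precedes it below -/
import Mathlib

section
/- Fix m₀ ≠ 0 and r > 0. Given (t,x,v) ∈ ℝ^(1+2n) and (m₁, m₂) ∈ ℝ^(2n), define the piecewise curve endpoint Φ_∇v(r/3, Φ_transport(r/3, Φ_∇v(r/3, (t,x,v), ω₁), ω₂), ω₃) where Φ_transport(s,(t,x,v),m) = (t+s·m, x+s·m·v, v) and Φ_∇v(s,(t,x,v),m) = (t, x, v+√s·m). Then with ω₁ = √3·(m₁/m₀ − r^(−1/2)·v), ω₂ = 3·m₀, ω₃ = √3·(m₂ − m₁/m₀ + r^(−1/2)·v), the endpoint equals (t + r·m₀, x + r^(3/2)·m₁, v + r^(1/2)·m₂). -/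
open Real

/-! The first kick replaces the velocity `v` by `√r • m₁ / m₀`, so transport for time `r * m₀`
moves `x` by exactly `r ^ (3/2) • m₁`; the two kicks together add `√(r/3) • √3 • m₂ = √r • m₂`
to the original velocity. -/

/-- The flow along the transport vector field `∂_t + v·∇ₓ`. -/
def PhiTransport (n : ℕ) (s : ℝ) (p : ℝ × (Fin n → ℝ) × (Fin n → ℝ)) (m : ℝ) :
    ℝ × (Fin n → ℝ) × (Fin n → ℝ) :=
  (p.1 + s * m, p.2.1 + (s * m) • p.2.2, p.2.2)

/-- The flow along the velocity vector field `∇ᵥ` (with square-root time scaling). -/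
noncomputable def PhiNablaV (n : ℕ) (s : ℝ) (p : ℝ × (Fin n → ℝ) × (Fin n → ℝ)) (m : Fin n → ℝ) :
    ℝ × (Fin n → ℝ) × (Fin n → ℝ) :=
  (p.1, p.2.1, p.2.2 + Real.sqrt s • m)

theorem phiNablaV_phiTransport_phiNablaV (n : ℕ) (s μ t : ℝ) (x v ω₁ ω₃ : Fin n → ℝ) :
    PhiNablaV n s (PhiTransport n s (PhiNablaV n s (t, x, v) ω₁) μ) ω₃ =
      (t + s * μ, x + (s * μ) • (v + √s • ω₁), v + √s • (ω₁ + ω₃)) := by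
  simp only [PhiNablaV, PhiTransport, smul_add, add_assoc]

theorem sqrt_div_three_mul_sqrt_three (r : ℝ) : √(r / 3) * √3 = √r := by
  rw [← sqrt_mul' _ (by norm_num), div_mul_cancel₀ _ (by norm_num)]

theorem rpow_neg_one_half {r : ℝ} (hr : 0 ≤ r) : r ^ (-(1 : ℝ) / 2) = (√r)⁻¹ := by
  rw [neg_div, rpow_neg hr, sqrt_eq_rpow]

theorem rpow_three_halves {r : ℝ} (hr : 0 ≤ r) : r ^ ((3 : ℝ) / 2) = r * √r := by
  rw [sqrt_eq_rpow, ← rpow_one_add' hr (by norm_num)]; norm_num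

theorem piecewise_kinetic_curve_endpoint_general (n : ℕ)
    (m₀ : ℝ) (hm₀ : m₀ ≠ 0) (r : ℝ) (hr : 0 < r)
    (t : ℝ) (x v m₁ m₂ : Fin n → ℝ) :
    PhiNablaV n (r / 3)
      (PhiTransport n (r / 3)
        (PhiNablaV n (r / 3) (t, x, v)
          (Real.sqrt 3 • (m₀⁻¹ • m₁ - r ^ (-(1 : ℝ) / 2) • v)))
        (3 * m₀))
      (Real.sqrt 3 • (m₂ - m₀⁻¹ • m₁ + r ^ (-(1 : ℝ) / 2) • v)) =
    (t + r * m₀, x + r ^ ((3 : ℝ) / 2) • m₁, v + r ^ ((1 : ℝ) / 2) • m₂) := by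
  have hsqrt_ne : √r ≠ 0 := (sqrt_pos.2 hr).ne'
  have hkick : v + √(r / 3) • √3 • (m₀⁻¹ • m₁ - r ^ (-(1 : ℝ) / 2) • v) = (√r * m₀⁻¹) • m₁ := by
    rw [smul_smul, sqrt_div_three_mul_sqrt_three, rpow_neg_one_half hr.le, smul_sub, smul_smul,
      smul_smul, mul_inv_cancel₀ hsqrt_ne, one_smul, add_sub_cancel]
  have hkicks : √3 • (m₀⁻¹ • m₁ - r ^ (-(1 : ℝ) / 2) • v) +
      √3 • (m₂ - m₀⁻¹ • m₁ + r ^ (-(1 : ℝ) / 2) • v) = √3 • m₂ := by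
    rw [← smul_add]; congr 1; abel
  rw [phiNablaV_phiTransport_phiNablaV, hkick, hkicks, smul_smul, smul_smul,
    sqrt_div_three_mul_sqrt_three, rpow_three_halves hr.le, ← sqrt_eq_rpow]
  have htime : r / 3 * (3 * m₀) = r * m₀ := by ring
  have hdisplacement : r * m₀ * (√r * m₀⁻¹) = r * √r := by field_simp
  rw [htime, hdisplacement]

/-- The piecewise curve `Φ_∇v(r/3, Φ_transport(r/3, Φ_∇v(r/3, (t,x,v), ω₁), ω₂), ω₃)` with
`ω₁ = √3(m₁/m₀ − r^(−1/2) v)`, `ω₂ = 3m₀`, `ω₃ = √3(m₂ − m₁/m₀ + r^(−1/2) v)` has endpoint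
`(t + r·m₀, x + r^(3/2)·m₁, v + r^(1/2)·m₂)`. -/
theorem piecewise_kinetic_curve_endpoint (n : ℕ) (hn : 1 ≤ n)
    (m₀ : ℝ) (hm₀ : m₀ ≠ 0) (r : ℝ) (hr : 0 < r)
    (t : ℝ) (x v m₁ m₂ : Fin n → ℝ) :
    PhiNablaV n (r / 3)
      (PhiTransport n (r / 3)
        (PhiNablaV n (r / 3) (t, x, v)
          (Real.sqrt 3 • (m₀⁻¹ • m₁ - r ^ (-(1 : ℝ) / 2) • v)))
        (3 * m₀))
      (Real.sqrt 3 • (m₂ - m₀⁻¹ • m₁ + r ^ (-(1 : ℝ) / 2) • v)) =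
    (t + r * m₀, x + r ^ ((3 : ℝ) / 2) • m₁, v + r ^ ((1 : ℝ) / 2) • m₂) :=
  piecewise_kinetic_curve_endpoint_general n m₀ hm₀ r hr t x v m₁ m₂
end

section
/- The function f(t, v₁, v₂) = exp((1/(4λ) − Λ)·t − v₁/(2λ))·cos(v₂) is a positive classical solution of ∂_t f = λ·∂²_{v₁} f + Λ·∂²_{v₂} f on (−2,2) × (−π/2, π/2)², and log(f(0,(0,0))/f(1,(1,0))) = Λ + 1/(4λ) > (Λ + 1/λ)/4. -/
/-!
The function is the separated solution `exp(a t) · exp(b v₁) · cos v₂`: each partial derivative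
reproduces it up to a constant factor (`a`, `b²` and `-1` respectively), so the equation
reduces to the dispersion relation `a = λ b² - Λ`, here with `b = -1/(2λ)`. The Harnack quotient
is then `exp` of a linear expression in `a` and `b`.
-/

open Real

noncomputable def expCos (a b t x y : ℝ) : ℝ := exp (a * t) * exp (b * x) * cos y

theorem deriv_deriv_exp_const_mul (c : ℝ) :
    deriv (deriv fun s => exp (c * s)) = fun s => c ^ 2 * exp (c * s) := by
  rw [← iteratedDeriv_exp_const_mul, iteratedDeriv_eq_iterate]
  rfl

namespace expCos

variable {a b t x y : ℝ}

theorem pos (hy : 0 < cos y) : 0 < expCos a b t x y := by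
  unfold expCos
  positivity

theorem deriv_time : deriv (fun s => expCos a b s x y) t = a * expCos a b t x y := by
  unfold expCos
  rw [deriv_mul_const_field', deriv_mul_const_field', ← iteratedDeriv_one,
    iteratedDeriv_exp_const_mul]
  ring

theorem deriv_deriv_space :
    deriv (deriv fun w => expCos a b t w y) x = b ^ 2 * expCos a b t x y := by
  unfold expCos
  simp only [deriv_mul_const_field', deriv_const_mul_field', deriv_deriv_exp_const_mul]
  ring

theorem deriv_deriv_angle : deriv (deriv fun w => expCos a b t x w) y = -expCos a b t x y := by
  unfold expCos
  simp only [deriv_const_mul_field', Real.deriv_cos', deriv.fun_neg, Real.deriv_sin]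
  ring

theorem heat_equation (lam Lam : ℝ) (hab : a = lam * b ^ 2 - Lam) :
    deriv (fun s => expCos a b s x y) t =
      lam * deriv (deriv fun w => expCos a b t w y) x +
        Lam * deriv (deriv fun w => expCos a b t x w) y := by
  rw [deriv_time, deriv_deriv_space, deriv_deriv_angle, hab]
  ring

theorem log_div_of_angle_zero (t' x' : ℝ) :
    log (expCos a b t x 0 / expCos a b t' x' 0) = a * (t - t') + b * (x - x') := by
  simp only [expCos, cos_zero, mul_one, ← exp_add, ← exp_sub, log_exp]
  ring

end expCos

/-- The function `f(t,v₁,v₂) = exp((1/(4λ) − Λ)t − v₁/(2λ))·cos v₂` is a positive classical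
solution of `∂_t f = λ ∂²_{v₁} f + Λ ∂²_{v₂} f` on `(−2,2) × (−π/2, π/2)²`, and
`log(f(0,(0,0))/f(1,(1,0))) = Λ + 1/(4λ) > (Λ + 1/λ)/4`. -/
theorem moser_optimality_example (lam Lam : ℝ) (hlam : 0 < lam) (hlamLam : lam ≤ Lam)
    (f : ℝ → ℝ → ℝ → ℝ)
    (hf : ∀ t v₁ v₂ : ℝ,
      f t v₁ v₂ = Real.exp ((1 / (4 * lam) - Lam) * t - v₁ / (2 * lam)) * Real.cos v₂) :
    (∀ t v₁ v₂ : ℝ, t ∈ Set.Ioo (-2 : ℝ) 2 → v₁ ∈ Set.Ioo (-(π / 2)) (π / 2) →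
        v₂ ∈ Set.Ioo (-(π / 2)) (π / 2) →
      0 < f t v₁ v₂ ∧
      deriv (fun s => f s v₁ v₂) t =
        lam * deriv (deriv (fun w => f t w v₂)) v₁ +
          Lam * deriv (deriv (fun w => f t v₁ w)) v₂) ∧
    Real.log (f 0 0 0 / f 1 1 0) = Lam + 1 / (4 * lam) ∧
    (Lam + 1 / lam) / 4 < Lam + 1 / (4 * lam) := by
  have hf_eq : f = expCos (1 / (4 * lam) - Lam) (-(1 / (2 * lam))) := by
    funext t v₁ v₂
    rw [hf, expCos, ← exp_add]
    ring_nf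
  subst hf_eq
  refine ⟨fun t v₁ v₂ _ _ hv₂ => ⟨expCos.pos (cos_pos_of_mem_Ioo hv₂),
    expCos.heat_equation lam Lam (by field_simp; ring)⟩, ?_, ?_⟩
  · rw [expCos.log_div_of_angle_zero]
    field_simp
    ring
  · have hLam : 0 < Lam := hlam.trans_le hlamLam
    have hquarter : (1 / lam) / 4 = 1 / (4 * lam) := by field_simp
    linarith
end

section
/- For the Kolmogorov fundamental solution Γ(t,x,v) = (√3)ⁿ/((2π)ⁿ·t^(2n))·exp(−|v|²/t + 3⟨v,x⟩/t² − 3|x|²/t³) (with t > 0, x,v ∈ ℝⁿ), and for any p > 0, δ ∈ (0,1), and 0 < t₀ < 1, the integral ∫₀^{t₀} ∫_{B_δ} ∫_{B_δ} Γ(t,x,v)^p dv dx dt is finite if and only if p < 1 + 1/(2n). In particular, for n = 1 one may verify finiteness fails at p = 3/2. -/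
/-!
Completing the square in `v`, `Γ(t,x,v)^p` is `t^(-2np)` times a Gaussian of variance `∼ t³` in
`x` and a Gaussian of variance `∼ t` in `v - 3x/(2t)`, so its integral over all of `ℝⁿ × ℝⁿ` is
`C t^(2n(1-p))`. Conversely, on `|x| < t^(3/2)`, `|v| < t^(1/2)` the exponent is at least `-7`, so
for small `t` the integral over `B_δ × B_δ` is at least `c t^(2n(1-p))`. The time integral therefore
converges iff `2n(1-p) > -1`, that is iff `p < 1 + 1/(2n)`.
-/

open MeasureTheory Real

open scoped ENNReal

theorem lintegral_ofReal_mul_exp_neg_mul_norm_sub_sq {V : Type*} [NormedAddCommGroup V]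
    [InnerProductSpace ℝ V] [FiniteDimensional ℝ V] [MeasurableSpace V] [BorelSpace V]
    {b c : ℝ} (hb : 0 < b) (hc : 0 ≤ c) (a : V) :
    ∫⁻ v, ENNReal.ofReal (c * exp (-b * ‖v - a‖ ^ 2)) =
      ENNReal.ofReal (c * (π / b) ^ (Module.finrank ℝ V / 2 : ℝ)) := by
  have hint : Integrable fun v : V => exp (-b * ‖v‖ ^ 2) := by
    refine .of_integral_ne_zero ?_
    rw [GaussianFourier.integral_rexp_neg_mul_sq_norm hb]
    positivity
  simp_rw [ENNReal.ofReal_mul hc]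
  rw [lintegral_const_mul' _ _ ENNReal.ofReal_ne_top,
    lintegral_sub_right_eq_self (fun v => ENNReal.ofReal (exp (-b * ‖v‖ ^ 2))) a,
    ← ofReal_integral_eq_lintegral_ofReal hint (.of_forall fun _ => (exp_pos _).le),
    GaussianFourier.integral_rexp_neg_mul_sq_norm hb]

theorem setLIntegral_prod_prod {α β γ : Type*} [MeasurableSpace α] [MeasurableSpace β]
    [MeasurableSpace γ] {μ : Measure α} {ν : Measure β} {ρ : Measure γ}
    [SFinite μ] [SFinite ν] [SFinite ρ]
    {f : α × β × γ → ℝ≥0∞} (hf : Measurable f) (s : Set α) (t : Set β) (u : Set γ) :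
    ∫⁻ z in s ×ˢ t ×ˢ u, f z ∂μ.prod (ν.prod ρ) =
      ∫⁻ a in s, ∫⁻ b in t, ∫⁻ c in u, f (a, b, c) ∂ρ ∂ν ∂μ := by
  rw [setLIntegral_prod _ hf.aemeasurable]
  exact lintegral_congr fun a => setLIntegral_prod _ (hf.comp measurable_prodMk_left).aemeasurable

theorem lintegral_Ioo_ofReal_rpow_lt_top_iff {s T : ℝ} (hT : 0 < T) :
    ∫⁻ t in Set.Ioo 0 T, ENNReal.ofReal (t ^ s) < ∞ ↔ -1 < s := by
  rw [← intervalIntegral.integrableOn_Ioo_rpow_iff hT, IntegrableOn,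
    ← lintegral_ofReal_ne_top_iff_integrable (by fun_prop)
      ((ae_restrict_iff' measurableSet_Ioo).2 (.of_forall fun t ht => rpow_nonneg ht.1.le s)),
    lt_top_iff_ne_top]

theorem lintegral_Ioo_lt_top_iff_of_rpow_bounds {f : ℝ → ℝ≥0∞} {s t₀ T : ℝ} {c C : ℝ≥0∞}
    (ht₀ : 0 < t₀) (hT : 0 < T) (hc : c ≠ 0) (hC : C ≠ ∞)
    (hlower : ∀ t ∈ Set.Ioo 0 T, c * ENNReal.ofReal (t ^ s) ≤ f t)
    (hupper : ∀ t ∈ Set.Ioo 0 t₀, f t ≤ C * ENNReal.ofReal (t ^ s)) :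
    ∫⁻ t in Set.Ioo 0 t₀, f t < ∞ ↔ -1 < s := by
  refine ⟨fun hf => ?_, fun hs => ?_⟩
  · rw [← lintegral_Ioo_ofReal_rpow_lt_top_iff (lt_min hT ht₀)]
    refine ENNReal.lt_top_of_mul_ne_top_right (ne_top_of_le_ne_top hf.ne ?_) hc
    calc c * ∫⁻ t in Set.Ioo 0 (min T t₀), ENNReal.ofReal (t ^ s)
        = ∫⁻ t in Set.Ioo 0 (min T t₀), c * ENNReal.ofReal (t ^ s) :=
          (lintegral_const_mul c (by fun_prop)).symm
      _ ≤ ∫⁻ t in Set.Ioo 0 (min T t₀), f t := setLIntegral_mono' measurableSet_Ioo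
          fun t ht => hlower t ⟨ht.1, ht.2.trans_le (min_le_left _ _)⟩
      _ ≤ ∫⁻ t in Set.Ioo 0 t₀, f t :=
          lintegral_mono_set (Set.Ioo_subset_Ioo_right (min_le_right _ _))
  · calc ∫⁻ t in Set.Ioo 0 t₀, f t ≤ ∫⁻ t in Set.Ioo 0 t₀, C * ENNReal.ofReal (t ^ s) :=
          setLIntegral_mono' measurableSet_Ioo hupper
      _ < ∞ := by
        rw [lintegral_const_mul' _ _ hC]
        exact ENNReal.mul_lt_top hC.lt_top ((lintegral_Ioo_ofReal_rpow_lt_top_iff ht₀).2 hs)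

section KolmogorovExponent

variable {V : Type*} [NormedAddCommGroup V] [InnerProductSpace ℝ V] {t : ℝ}

theorem kolmogorov_exponent_eq_complete_square (ht : 0 < t) (x v : V) :
    -(‖v‖ ^ 2) / t + 3 * inner ℝ v x / t ^ 2 - 3 * ‖x‖ ^ 2 / t ^ 3 =
      -(3 / (4 * t ^ 3)) * ‖x‖ ^ 2 - 1 / t * ‖v - (3 / (2 * t)) • x‖ ^ 2 := by
  rw [norm_sub_sq_real, real_inner_smul_right, norm_smul, mul_pow, norm_eq_abs, sq_abs]
  field_simp
  ring

theorem neg_seven_le_kolmogorov_exponent (ht : 0 < t) {x v : V} (hx : ‖x‖ ^ 2 ≤ t ^ 3)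
    (hv : ‖v‖ ^ 2 ≤ t) :
    -7 ≤ -(‖v‖ ^ 2) / t + 3 * inner ℝ v x / t ^ 2 - 3 * ‖x‖ ^ 2 / t ^ 3 := by
  have hvx : -(t ^ 2) ≤ inner ℝ v x := by
    have hnorms : ‖v‖ * ‖x‖ ≤ t ^ 2 :=
      abs_le_of_sq_le_sq' (by rw [mul_pow]; nlinarith [sq_nonneg ‖v‖]) (by positivity) |>.2
    linarith [neg_le_of_abs_le (abs_real_inner_le_norm v x)]
  have h1 : ‖v‖ ^ 2 / t ≤ 1 := div_le_one_of_le₀ hv ht.le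
  have h2 : -1 ≤ inner ℝ v x / t ^ 2 := by
    rw [le_div_iff₀ (by positivity)]; linarith
  have h3 : ‖x‖ ^ 2 / t ^ 3 ≤ 1 := div_le_one_of_le₀ hx (by positivity)
  rw [neg_div, mul_div_assoc, mul_div_assoc]
  linarith

end KolmogorovExponent

noncomputable def kolmogorovKernel (n : ℕ) (t : ℝ) (x v : EuclideanSpace ℝ (Fin n)) : ℝ :=
  √3 ^ n / ((2 * π) ^ n * t ^ (2 * n)) *
    exp (-(‖v‖ ^ 2) / t + 3 * inner ℝ v x / t ^ 2 - 3 * ‖x‖ ^ 2 / t ^ 3)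

section KolmogorovKernel

variable {n : ℕ} {p t : ℝ}

theorem kolmogorovKernel_nonneg (t : ℝ) (x v : EuclideanSpace ℝ (Fin n)) :
    0 ≤ kolmogorovKernel n t x v := by
  have := (even_two_mul n).pow_nonneg t
  unfold kolmogorovKernel
  positivity

theorem kolmogorov_prefactor_rpow (ht : 0 < t) :
    (√3 ^ n / ((2 * π) ^ n * t ^ (2 * n))) ^ p =
      (√3 ^ n / (2 * π) ^ n) ^ p * t ^ (-(2 * n * p) : ℝ) := by
  rw [← div_div, div_rpow (by positivity) (by positivity), ← rpow_natCast t, ← rpow_mul ht.le,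
    rpow_neg ht.le, div_eq_mul_inv]
  push_cast
  ring_nf

theorem kolmogorovKernel_rpow_eq (ht : 0 < t) (x v : EuclideanSpace ℝ (Fin n)) :
    kolmogorovKernel n t x v ^ p = (√3 ^ n / (2 * π) ^ n) ^ p * t ^ (-(2 * n * p) : ℝ) *
      exp (-(3 * p / (4 * t ^ 3)) * ‖x‖ ^ 2) * exp (-(p / t) * ‖v - (3 / (2 * t)) • x‖ ^ 2) := by
  rw [kolmogorovKernel, mul_rpow (by positivity) (exp_pos _).le, kolmogorov_prefactor_rpow ht,
    ← exp_mul, kolmogorov_exponent_eq_complete_square ht, mul_assoc (_ * _) (exp _), ← exp_add]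
  ring_nf

theorem lintegral_lintegral_kolmogorovKernel_rpow (hp : 0 < p) (ht : 0 < t) :
    ∫⁻ x, ∫⁻ v, ENNReal.ofReal (kolmogorovKernel n t x v ^ p) =
      ENNReal.ofReal ((√3 ^ n / (2 * π) ^ n) ^ p * (4 * π ^ 2 / (3 * p ^ 2)) ^ (n / 2 : ℝ)) *
        ENNReal.ofReal (t ^ (2 * n * (1 - p) : ℝ)) := by
  set a : ℝ := (√3 ^ n / (2 * π) ^ n) ^ p * t ^ (-(2 * n * p) : ℝ)
  have gaussian {b c : ℝ} (hb : 0 < b) (hc : 0 ≤ c) (y : EuclideanSpace ℝ (Fin n)) :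
      ∫⁻ v, ENNReal.ofReal (c * exp (-b * ‖v - y‖ ^ 2)) =
        ENNReal.ofReal (c * (π / b) ^ (n / 2 : ℝ)) := by
    rw [lintegral_ofReal_mul_exp_neg_mul_norm_sub_sq hb hc, finrank_euclideanSpace_fin]
  have inner_integral (x : EuclideanSpace ℝ (Fin n)) :
      ∫⁻ v, ENNReal.ofReal (kolmogorovKernel n t x v ^ p) = ENNReal.ofReal
        (a * (π / (p / t)) ^ (n / 2 : ℝ) * exp (-(3 * p / (4 * t ^ 3)) * ‖x - 0‖ ^ 2)) := by
    simp_rw [kolmogorovKernel_rpow_eq ht]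
    rw [gaussian (by positivity) (by positivity), sub_zero, mul_right_comm]
  simp_rw [inner_integral]
  rw [gaussian (by positivity) (by positivity), ← ENNReal.ofReal_mul (by positivity)]
  congr 1
  have hvariances : π / (p / t) * (π / (3 * p / (4 * t ^ 3))) =
      4 * π ^ 2 / (3 * p ^ 2) * t ^ (4 : ℝ) := by
    rw [show (4 : ℝ) = (4 : ℕ) by norm_num, rpow_natCast]
    field_simp
  have htime : t ^ (2 * n * (1 - p) : ℝ) = t ^ (-(2 * n * p) : ℝ) * t ^ (4 * (n / 2) : ℝ) := by
    rw [← rpow_add ht]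
    ring_nf
  rw [mul_assoc, ← mul_rpow (by positivity) (by positivity), hvariances,
    mul_rpow (by positivity) (by positivity), ← rpow_mul ht.le, htime]
  ring

theorem kolmogorov_upper_bound (hp : 0 < p) (ht : 0 < t) (s u : Set (EuclideanSpace ℝ (Fin n))) :
    ∫⁻ x in s, ∫⁻ v in u, ENNReal.ofReal (kolmogorovKernel n t x v ^ p) ≤
      ENNReal.ofReal ((√3 ^ n / (2 * π) ^ n) ^ p * (4 * π ^ 2 / (3 * p ^ 2)) ^ (n / 2 : ℝ)) *
        ENNReal.ofReal (t ^ (2 * n * (1 - p) : ℝ)) :=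
  lintegral_lintegral_kolmogorovKernel_rpow hp ht ▸
    (lintegral_mono fun _ => setLIntegral_le_lintegral _ _).trans (setLIntegral_le_lintegral _ _)

theorem kolmogorovKernel_rpow_ge (hp : 0 ≤ p) (ht : 0 < t) {x v : EuclideanSpace ℝ (Fin n)}
    (hx : ‖x‖ < t * √t) (hv : ‖v‖ < √t) :
    (√3 ^ n / (2 * π) ^ n * exp (-7)) ^ p * t ^ (-(2 * n * p) : ℝ) ≤
      kolmogorovKernel n t x v ^ p := by
  have hx' : ‖x‖ ^ 2 ≤ t ^ 3 := by
    have := pow_le_pow_left₀ (norm_nonneg x) hx.le 2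
    rwa [mul_pow, sq_sqrt ht.le, ← pow_succ] at this
  have hv' : ‖v‖ ^ 2 ≤ t := by
    simpa [sq_sqrt ht.le] using pow_le_pow_left₀ (norm_nonneg v) hv.le 2
  rw [mul_rpow (by positivity) (exp_pos _).le, mul_right_comm, ← kolmogorov_prefactor_rpow ht,
    ← mul_rpow (by positivity) (exp_pos _).le]
  exact rpow_le_rpow (by positivity) (mul_le_mul_of_nonneg_left
    (exp_le_exp.2 (neg_seven_le_kolmogorov_exponent ht hx' hv')) (by positivity)) hp

theorem kolmogorov_lower_bound {δ : ℝ} (hp : 0 ≤ p) (ht : 0 < t) (ht1 : t ≤ 1) (htδ : √t ≤ δ) :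
    ENNReal.ofReal ((√3 ^ n / (2 * π) ^ n * exp (-7)) ^ p) *
        volume (Metric.ball (0 : EuclideanSpace ℝ (Fin n)) 1) ^ 2 *
        ENNReal.ofReal (t ^ (2 * n * (1 - p) : ℝ)) ≤
      ∫⁻ x in Metric.ball 0 δ, ∫⁻ v in Metric.ball 0 δ,
        ENNReal.ofReal (kolmogorovKernel n t x v ^ p) := by
  set c : ℝ := (√3 ^ n / (2 * π) ^ n * exp (-7)) ^ p
  have hsqrt : 0 < √t := sqrt_pos.2 ht
  have hvolume : c * t ^ (-(2 * n * p) : ℝ) * ((√t) ^ n * (t * √t) ^ n) =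
      c * t ^ (2 * n * (1 - p) : ℝ) := by
    rw [← mul_pow, mul_left_comm, mul_self_sqrt ht.le, ← sq, ← pow_mul, ← rpow_natCast,
      mul_assoc, ← rpow_add ht]
    push_cast
    ring_nf
  calc ENNReal.ofReal c * volume (Metric.ball (0 : EuclideanSpace ℝ (Fin n)) 1) ^ 2 *
          ENNReal.ofReal (t ^ (2 * n * (1 - p) : ℝ))
      = ∫⁻ x in Metric.ball 0 (t * √t), ∫⁻ v in Metric.ball 0 √t,
          ENNReal.ofReal (c * t ^ (-(2 * n * p) : ℝ)) := by
        rw [setLIntegral_const, setLIntegral_const, Measure.addHaar_ball_of_pos _ _ hsqrt,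
          Measure.addHaar_ball_of_pos (r := t * √t) _ _ (by positivity),
          finrank_euclideanSpace_fin, mul_right_comm, ← ENNReal.ofReal_mul (by positivity),
          ← hvolume, ENNReal.ofReal_mul (by positivity), ENNReal.ofReal_mul (by positivity),
          ENNReal.ofReal_mul (by positivity)]
        ring
    _ ≤ ∫⁻ x in Metric.ball 0 (t * √t), ∫⁻ v in Metric.ball 0 √t,
          ENNReal.ofReal (kolmogorovKernel n t x v ^ p) :=
        setLIntegral_mono' measurableSet_ball fun x hx => setLIntegral_mono' measurableSet_ball
          fun v hv => ENNReal.ofReal_le_ofReal <|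
            kolmogorovKernel_rpow_ge hp ht (mem_ball_zero_iff.1 hx) (mem_ball_zero_iff.1 hv)
    _ ≤ _ :=
        (lintegral_mono fun _ => lintegral_mono_set (Metric.ball_subset_ball htδ)).trans
          (lintegral_mono_set (Metric.ball_subset_ball
            ((mul_le_of_le_one_left hsqrt.le ht1).trans htδ)))

end KolmogorovKernel

/-- For the Kolmogorov fundamental solution
`Γ(t,x,v) = (√3)ⁿ/((2π)ⁿ t^(2n)) exp(−|v|²/t + 3⟨v,x⟩/t² − 3|x|²/t³)` and any `p > 0`,
`δ ∈ (0,1)`, `0 < t₀ < 1`, the integral `∫₀^{t₀}∫_{B_δ}∫_{B_δ} Γ^p dv dx dt` is finite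
if and only if `p < 1 + 1/(2n)`. -/
theorem kolmogorov_fundamental_solution_power_integrability
    (n : ℕ) (hn : 1 ≤ n) (p : ℝ) (hp : 0 < p)
    (δ : ℝ) (hδ : δ ∈ Set.Ioo (0 : ℝ) 1) (t₀ : ℝ) (ht₀ : t₀ ∈ Set.Ioo (0 : ℝ) 1)
    (Γ : ℝ → EuclideanSpace ℝ (Fin n) → EuclideanSpace ℝ (Fin n) → ℝ)
    (hΓ : ∀ (t : ℝ), 0 < t → ∀ x v : EuclideanSpace ℝ (Fin n),
      Γ t x v = (Real.sqrt 3) ^ n / ((2 * π) ^ n * t ^ (2 * n)) *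
        Real.exp (-(‖v‖ ^ 2) / t + 3 * (inner ℝ v x : ℝ) / t ^ 2 - 3 * ‖x‖ ^ 2 / t ^ 3)) :
    IntegrableOn
      (fun z : ℝ × EuclideanSpace ℝ (Fin n) × EuclideanSpace ℝ (Fin n) =>
        (Γ z.1 z.2.1 z.2.2) ^ p)
      (Set.Ioo (0 : ℝ) t₀ ×ˢ (Metric.ball 0 δ ×ˢ Metric.ball 0 δ)) volume ↔
    p < 1 + 1 / (2 * n) := by
  have hmeas : Measurable fun z : ℝ × EuclideanSpace ℝ (Fin n) × EuclideanSpace ℝ (Fin n) =>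
      kolmogorovKernel n z.1 z.2.1 z.2.2 ^ p := by
    unfold kolmogorovKernel
    fun_prop
  have hexponent : p < 1 + 1 / (2 * n) ↔ -1 < 2 * n * (1 - p) := by
    have h2n : (0 : ℝ) < 2 * n := mul_pos two_pos (Nat.cast_pos.2 hn)
    rw [show 1 + 1 / (2 * n : ℝ) = (2 * n + 1) / (2 * n) by field_simp, lt_div_iff₀ h2n]
    constructor <;> intro h <;> linarith
  rw [integrableOn_congr_fun (g := fun z => kolmogorovKernel n z.1 z.2.1 z.2.2 ^ p)
      (fun z hz => congrArg (· ^ p) (hΓ _ hz.1.1 _ _))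
      (measurableSet_Ioo.prod (measurableSet_ball.prod measurableSet_ball)),
    IntegrableOn, ← lintegral_ofReal_ne_top_iff_integrable hmeas.aestronglyMeasurable
      (.of_forall fun z => rpow_nonneg (kolmogorovKernel_nonneg _ _ _) p),
    ← lt_top_iff_ne_top, Measure.volume_eq_prod, Measure.volume_eq_prod,
    setLIntegral_prod_prod hmeas.ennreal_ofReal, hexponent]
  refine lintegral_Ioo_lt_top_iff_of_rpow_bounds ht₀.1 (lt_min one_pos (pow_pos hδ.1 2))
    (mul_ne_zero (by positivity) (pow_ne_zero 2 (Metric.measure_ball_pos _ _ one_pos).ne'))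
    ENNReal.ofReal_ne_top (fun t ht => kolmogorov_lower_bound hp.le ht.1
      (ht.2.le.trans (min_le_left _ _))
      ((sqrt_le_left hδ.1.le).2 (ht.2.le.trans (min_le_right _ _))))
    (fun t ht => kolmogorov_upper_bound hp ht.1 _ _)
end
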